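/- Let u : [0,∞) × 𝕋 → ℝ be a smooth positive solution of ∂_t u = ∂_{xx} u + (∂_x u)²/u on the torus 𝕋 (equivalently u = √φ with φ solving the heat equation). Then d/dt ∫_𝕋 (∂_x u)² = −2 ∫_𝕋 (∂_{xx} u)² − (2/3) ∫_𝕋 (∂_x u)⁴ / u², and in particular d/dt ∫_𝕋 (∂_x u)² ≤ −8π² ∫_𝕋 (∂_x u)². -/

import Mathlib

set_option maxHeartbeats 1000000
open MeasureTheory Set intervalIntegral Complex
open scoped Real ENNReal

attribute [local instance] ZeroLEOneClass.factZeroLtOne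

lemma summable_sq_fourierCoeff (f : Lp ℂ 2 <| @AddCircle.haarAddCircle (1:ℝ) _) :
    Summable fun i : ℤ => ‖fourierCoeff (⇑f) i‖ ^ 2 := by
  have h := Memℓp.summable (by norm_num) (lp.memℓp (fourierBasis.repr f))
  simp only [fourierBasis_repr] at h
  have h2 : (2:ℝ≥0∞).toReal = ((2:ℕ):ℝ) := by norm_num
  rw [h2] at h
  simpa [Real.rpow_natCast] using h

lemma parseval_cont {g : ℝ → ℝ} (hgc : Continuous g) (hper : ∀ x, g (x + 1) = g x) :
    (Summable fun n : ℤ => ‖fourierCoeffOn zero_lt_one (fun x => (g x : ℂ)) n‖ ^ 2) ∧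
    ∑' n : ℤ, ‖fourierCoeffOn zero_lt_one (fun x => (g x : ℂ)) n‖ ^ 2
      = ∫ x in (0:ℝ)..1, g x ^ 2 := by
  set gc : ℝ → ℂ := fun x => (g x : ℂ) with hgc_def
  have hper' : gc 0 = gc 1 := by simp [gc]; rw [← hper 0]; norm_num
  have hFcont : Continuous (AddCircle.liftIco 1 0 gc) :=
    AddCircle.liftIco_zero_continuous hper' (Continuous.continuousOn (by continuity))
  set Fc : C(AddCircle (1:ℝ), ℂ) := ⟨_, hFcont⟩ with hFc_def
  have hEval : ∀ x ∈ Icc (0:ℝ) 1, AddCircle.liftIco 1 0 gc (↑x) = gc x := by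
    intro x hx
    rcases eq_or_lt_of_le hx.2 with h1 | h1
    · subst h1
      have : ((1:ℝ) : AddCircle (1:ℝ)) = ((0:ℝ) : AddCircle (1:ℝ)) := by
        simpa using AddCircle.coe_add_period 1 0
      rw [this, AddCircle.liftIco_zero_coe_apply (by constructor <;> norm_num), ← hper']
    · exact AddCircle.liftIco_zero_coe_apply ⟨hx.1, h1⟩
  have hcoeff : ∀ n : ℤ, fourierCoeff (⇑Fc) n = fourierCoeffOn zero_lt_one gc n := by
    intro n
    have := fourierCoeff_liftIco_eq (T := 1) (a := 0) gc n
    rw [show (⇑Fc) = AddCircle.liftIco 1 0 gc from rfl]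
    simpa using this
  set fLp := ContinuousMap.toLp (E := ℂ) 2 AddCircle.haarAddCircle ℂ Fc with hfLp
  have hc2 : ∀ n : ℤ, fourierCoeff (⇑fLp) n = fourierCoeffOn zero_lt_one gc n := by
    intro n; rw [fourierCoeff_toLp, hcoeff]
  have hsum := summable_sq_fourierCoeff fLp
  simp only [hc2] at hsum
  refine ⟨hsum, ?_⟩
  have hpar := tsum_sq_fourierCoeff fLp
  simp only [hc2] at hpar
  rw [hpar]
  have hae : ∫ t : AddCircle (1:ℝ), ‖fLp t‖ ^ 2 ∂AddCircle.haarAddCircle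
      = ∫ t : AddCircle (1:ℝ), ‖Fc t‖ ^ 2 ∂AddCircle.haarAddCircle := by
    refine integral_congr_ae ?_
    filter_upwards [ContinuousMap.coeFn_toLp (p := 2) (𝕜 := ℂ) AddCircle.haarAddCircle Fc]
      with t ht
    rw [ht]
  rw [hae]
  have hvol : (volume : Measure (AddCircle (1:ℝ))) = AddCircle.haarAddCircle := by
    rw [AddCircle.volume_eq_smul_haarAddCircle]; simp
  rw [← hvol]
  have := AddCircle.intervalIntegral_preimage 1 0 (fun t : AddCircle (1:ℝ) => ‖Fc t‖ ^ 2)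
  rw [zero_add] at this
  rw [← this]
  refine intervalIntegral.integral_congr ?_
  intro x hx
  rw [uIcc_of_le (by norm_num : (0:ℝ) ≤ 1)] at hx
  show ‖AddCircle.liftIco 1 0 gc (↑x)‖ ^ 2 = g x ^ 2
  rw [hEval x hx]
  simp [gc, Complex.norm_real, _root_.sq_abs]

lemma wirtinger {g g' : ℝ → ℝ} (hg : ∀ x, HasDerivAt g (g' x) x)
    (hc' : Continuous g') (hper : ∀ x, g (x + 1) = g x)
    (hmean : ∫ x in (0:ℝ)..1, g x = 0) :
    4 * π ^ 2 * ∫ x in (0:ℝ)..1, g x ^ 2 ≤ ∫ x in (0:ℝ)..1, g' x ^ 2 := by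
  have hgc : Continuous g := by
    rw [continuous_iff_continuousAt]; exact fun x => (hg x).continuousAt
  have hgp : Function.Periodic g 1 := hper
  have hper' : ∀ x, g' (x + 1) = g' x := by
    intro x
    have h1 : g' (x + 1) = deriv g (x + 1) := ((hg (x + 1)).deriv).symm
    have h2 : g' x = deriv g x := ((hg x).deriv).symm
    have hfun : (fun y => g (y + 1)) = g := funext hper
    have hd : deriv (fun y => g (y + 1)) x = deriv g (x + 1) := by
      rw [deriv_comp_add_const]
    rw [h1, h2, ← hd, hfun]
  obtain ⟨hsa, hta⟩ := parseval_cont hgc hper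
  obtain ⟨hsb, htb⟩ := parseval_cont hc' hper'
  set c : ℤ → ℂ := fun n => fourierCoeffOn zero_lt_one (fun x => (g x : ℂ)) n with hc_def
  set c' : ℤ → ℂ := fun n => fourierCoeffOn zero_lt_one (fun x => (g' x : ℂ)) n with hc'_def
  have hg1 : g 1 = g 0 := by have := hper 0; rwa [zero_add] at this
  have hrel : ∀ n : ℤ, n ≠ 0 → c' n = (2 * ↑π * Complex.I * n) * c n := by
    intro n hn
    have hint : IntervalIntegrable (fun x => (g' x : ℂ)) volume 0 1 :=
      (Complex.continuous_ofReal.comp hc').intervalIntegrable 0 1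
    have h := fourierCoeffOn_of_hasDerivAt zero_lt_one hn
      (f := fun x => (g x : ℂ)) (f' := fun x => (g' x : ℂ))
      (fun x _ => (hg x).ofReal_comp) hint
    rw [show ((g 1 : ℂ)) - (g 0 : ℂ) = 0 by rw [hg1]; ring] at h
    simp only [hc_def, hc'_def]
    rw [h]
    have hπ : (↑π : ℂ) ≠ 0 := Complex.ofReal_ne_zero.mpr Real.pi_ne_zero
    have hnℂ : (n : ℂ) ≠ 0 := Int.cast_ne_zero.mpr hn
    field_simp
    push_cast
    ring
  have h0 : c 0 = 0 := by
    rw [hc_def]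
    simp only [fourierCoeffOn_eq_integral, neg_zero, fourier_zero, one_smul, sub_zero]
    rw [intervalIntegral.integral_ofReal, hmean]
    simp
  have key : ∀ n : ℤ, 4 * π ^ 2 * ‖c n‖ ^ 2 ≤ ‖c' n‖ ^ 2 := by
    intro n
    by_cases hn : n = 0
    · subst hn; rw [h0]; simp

    · rw [hrel n hn, norm_mul, mul_pow]
      have hnn : ‖(2 * ↑π * Complex.I * (n:ℂ))‖ ^ 2 = 4 * π ^ 2 * (n:ℝ) ^ 2 := by
        simp only [norm_mul, Complex.norm_I, Complex.norm_intCast, Complex.norm_real,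
          Complex.norm_ofNat, Real.norm_eq_abs, mul_one, mul_pow, _root_.sq_abs]
        ring
      rw [hnn]
      have h1n : (1:ℝ) ≤ (n:ℝ) ^ 2 := by
        have := Int.one_le_abs (show n ≠ 0 from hn)
        have h2 : (1:ℝ) ≤ |(n:ℝ)| := by exact_mod_cast this
        rw [← _root_.sq_abs ((n:ℝ))]
        nlinarith [abs_nonneg (n:ℝ)]
      calc 4 * π ^ 2 * ‖c n‖ ^ 2 = 4 * π ^ 2 * ‖c n‖ ^ 2 * 1 := by ring
        _ ≤ 4 * π ^ 2 * ‖c n‖ ^ 2 * (n:ℝ) ^ 2 :=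
            mul_le_mul_of_nonneg_left h1n (by positivity)
        _ = 4 * π ^ 2 * (n:ℝ) ^ 2 * ‖c n‖ ^ 2 := by ring
  rw [← hta, ← htb, ← tsum_mul_left]
  exact Summable.tsum_le_tsum key (hsa.mul_left _) hsb


lemma periodic_deriv'' (f : ℝ → ℝ) (hf : ∀ x, f (x + 1) = f x) (x : ℝ) :
    deriv f (x + 1) = deriv f x := by
  have hfun : (fun y => f (y + 1)) = f := funext hf
  have hd : deriv (fun y => f (y + 1)) x = deriv f (x + 1) := by
    rw [deriv_comp_add_const]
  rw [← hd, hfun]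

lemma slice_x {U : ℝ × ℝ → ℝ} (hU : ContDiff ℝ (⊤ : ℕ∞) U) (t x : ℝ) :
    HasDerivAt (fun y => U (t, y)) (fderiv ℝ U (t, x) (0, 1)) x := by
  have h := (hU.differentiable (by simp) (t, x)).hasFDerivAt
  have hc : HasDerivAt (fun y : ℝ => ((t, y) : ℝ × ℝ)) (((0:ℝ), (1:ℝ)) : ℝ × ℝ) x :=
    (hasDerivAt_const x t).prodMk (hasDerivAt_id x)
  exact h.comp_hasDerivAt x hc

lemma slice_t {U : ℝ × ℝ → ℝ} (hU : ContDiff ℝ (⊤ : ℕ∞) U) (t x : ℝ) :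
    HasDerivAt (fun s => U (s, x)) (fderiv ℝ U (t, x) (1, 0)) t := by
  have h := (hU.differentiable (by simp) (t, x)).hasFDerivAt
  have hc : HasDerivAt (fun s : ℝ => ((s, x) : ℝ × ℝ)) (((1:ℝ), (0:ℝ)) : ℝ × ℝ) t :=
    (hasDerivAt_id t).prodMk (hasDerivAt_const t x)
  exact h.comp_hasDerivAt t hc

lemma contDiff_fderiv_apply {U : ℝ × ℝ → ℝ} (hU : ContDiff ℝ (⊤ : ℕ∞) U) (c : ℝ × ℝ) :
    ContDiff ℝ (⊤ : ℕ∞) (fun p => fderiv ℝ U p c) :=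
  (hU.fderiv_right (by simp)).clm_apply contDiff_const

lemma clairaut {U : ℝ × ℝ → ℝ} (hU : ContDiff ℝ (⊤ : ℕ∞) U) (p : ℝ × ℝ) (c d : ℝ × ℝ) :
    fderiv ℝ (fun q => fderiv ℝ U q c) p d = fderiv ℝ (fun q => fderiv ℝ U q d) p c := by
  have hd : ∀ y, HasFDerivAt U (fderiv ℝ U y) y := fun y =>
    (hU.differentiable (by simp) y).hasFDerivAt
  have hdd : HasFDerivAt (fderiv ℝ U) (fderiv ℝ (fderiv ℝ U) p) p :=
    (((hU.fderiv_right (m := (⊤ : ℕ∞)) (by simp)).differentiable (by simp)) p).hasFDerivAt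
  have hsym := second_derivative_symmetric hd hdd d c
  have e : ∀ c' : ℝ × ℝ, fderiv ℝ (fun q => fderiv ℝ U q c') p
      = (fderiv ℝ (fderiv ℝ U) p).flip c' := by
    intro c'
    have := hdd.clm_apply (hasFDerivAt_const c' p)
    have h2 := this.fderiv
    simpa using h2
  rw [e c, e d]
  simp only [ContinuousLinearMap.flip_apply]
  exact hsym

/-- Evolution of the Dirichlet energy of `u = √φ` for the heat equation on the torus:
exact derivative identity and the resulting Poincaré–Wirtinger decay estimate. -/
theorem sqrt_heat_dirichlet_decay
    (u : ℝ → ℝ → ℝ)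
    (hsmooth : ContDiff ℝ (⊤ : ℕ∞) (fun p : ℝ × ℝ => u p.1 p.2))
    (hpos : ∀ t x, 0 < u t x)
    (hper : ∀ t x, u t (x + 1) = u t x)
    (hpde : ∀ t x, HasDerivAt (fun s => u s x)
        (deriv (deriv (u t)) x + (deriv (u t) x) ^ 2 / u t x) t) :
    ∀ t : ℝ,
      HasDerivAt (fun s => ∫ x in (0:ℝ)..1, (deriv (u s) x) ^ 2)
        (-2 * (∫ x in (0:ℝ)..1, (deriv (deriv (u t)) x) ^ 2)
          - (2 / 3) * ∫ x in (0:ℝ)..1, (deriv (u t) x) ^ 4 / (u t x) ^ 2) t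
      ∧ (-2 * (∫ x in (0:ℝ)..1, (deriv (deriv (u t)) x) ^ 2)
          - (2 / 3) * ∫ x in (0:ℝ)..1, (deriv (u t) x) ^ 4 / (u t x) ^ 2)
        ≤ -8 * Real.pi ^ 2 * ∫ x in (0:ℝ)..1, (deriv (u t) x) ^ 2 := by
  intro t
  have hU : ContDiff ℝ (⊤ : ℕ∞) (fun p : ℝ × ℝ => u p.1 p.2) := hsmooth
  set U : ℝ × ℝ → ℝ := fun p => u p.1 p.2 with hU_def
  set v : ℝ × ℝ → ℝ := fun p => fderiv ℝ U p (0, 1) with hv_def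
  have hv : ContDiff ℝ (⊤ : ℕ∞) v := contDiff_fderiv_apply hU (0, 1)
  set w : ℝ × ℝ → ℝ := fun p => fderiv ℝ U p (1, 0) with hw_def
  have hw : ContDiff ℝ (⊤ : ℕ∞) w := contDiff_fderiv_apply hU (1, 0)
  set v2 : ℝ × ℝ → ℝ := fun p => fderiv ℝ v p (0, 1) with hv2_def
  have hv2 : ContDiff ℝ (⊤ : ℕ∞) v2 := contDiff_fderiv_apply hv (0, 1)
  set vt : ℝ × ℝ → ℝ := fun p => fderiv ℝ v p (1, 0) with hvt_def
  have hvt : ContDiff ℝ (⊤ : ℕ∞) vt := contDiff_fderiv_apply hv (1, 0)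
  set wx : ℝ × ℝ → ℝ := fun p => fderiv ℝ w p (0, 1) with hwx_def
  have hwxC : ContDiff ℝ (⊤ : ℕ∞) wx := contDiff_fderiv_apply hw (0, 1)
  -- slice derivatives
  have hvx : ∀ s x, HasDerivAt (u s) (v (s, x)) x := fun s x => slice_x hU s x
  have hderiv_eq : ∀ s x, deriv (u s) x = v (s, x) := fun s x => (hvx s x).deriv
  have hwt : ∀ s x, HasDerivAt (fun r => u r x) (w (s, x)) s := fun s x => slice_t hU s x
  have hvx2 : ∀ s x, HasDerivAt (fun y => v (s, y)) (v2 (s, x)) x := fun s x => slice_x hv s x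
  have hvs : ∀ s x, HasDerivAt (fun r => v (r, x)) (vt (s, x)) s := fun s x => slice_t hv s x
  have hwx : ∀ s x, HasDerivAt (fun y => w (s, y)) (wx (s, x)) x := fun s x => slice_x hw s x
  have hclair : ∀ p : ℝ × ℝ, vt p = wx p := fun p => clairaut hU p (0, 1) (1, 0)
  have hderiv2_eq : ∀ s x, deriv (deriv (u s)) x = v2 (s, x) := by
    intro s x
    have h1 : deriv (u s) = fun y => v (s, y) := funext fun y => hderiv_eq s y
    rw [h1]
    exact (hvx2 s x).deriv
  have hpde' : ∀ s x, w (s, x) = v2 (s, x) + (v (s, x)) ^ 2 / u s x := by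
    intro s x
    have h1 := (hwt s x).unique (hpde s x)
    rw [h1, hderiv2_eq, hderiv_eq]
  -- continuity of slices
  have hcu : ∀ s, Continuous (u s) := fun s =>
    hU.continuous.comp (continuous_const.prodMk continuous_id)
  have hcv : ∀ s, Continuous fun x => v (s, x) :=
    fun s => hv.continuous.comp (continuous_const.prodMk continuous_id)
  have hcv2 : ∀ s, Continuous fun x => v2 (s, x) :=
    fun s => hv2.continuous.comp (continuous_const.prodMk continuous_id)
  have hcvt : ∀ s, Continuous fun x => vt (s, x) :=
    fun s => hvt.continuous.comp (continuous_const.prodMk continuous_id)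
  have hcw : ∀ s, Continuous fun x => w (s, x) :=
    fun s => hw.continuous.comp (continuous_const.prodMk continuous_id)
  -- periodicity
  have hvper : ∀ s x, v (s, x + 1) = v (s, x) := by
    intro s x
    rw [← hderiv_eq, ← hderiv_eq]
    exact periodic_deriv'' (u s) (hper s) x
  have hv2per : ∀ s x, v2 (s, x + 1) = v2 (s, x) := by
    intro s x
    have h1 : ∀ y, deriv (fun z => v (s, z)) y = v2 (s, y) := fun y => (hvx2 s y).deriv
    rw [← h1, ← h1]
    exact periodic_deriv'' (fun z => v (s, z)) (fun y => hvper s y) x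
  have hwper : ∀ s x, w (s, x + 1) = w (s, x) := by
    intro s x
    rw [hpde' s (x + 1), hpde' s x, hvper, hv2per, hper]
  have hv10 : v (t, 1) = v (t, 0) := by have := hvper t 0; rwa [zero_add] at this
  have hw10 : w (t, 1) = w (t, 0) := by have := hwper t 0; rwa [zero_add] at this
  have hu10 : u t 1 = u t 0 := by have := hper t 0; rwa [zero_add] at this
  -- Step 1 : differentiate under the integral sign
  have step1 : HasDerivAt (fun s => ∫ x in (0:ℝ)..1, (v (s, x)) ^ 2)
      (∫ x in (0:ℝ)..1, 2 * v (t, x) * vt (t, x)) t := by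
    have hK : IsCompact ((Icc (t - 1) (t + 1)) ×ˢ (Icc (0:ℝ) 1)) :=
      isCompact_Icc.prod isCompact_Icc
    have hfc : Continuous fun p : ℝ × ℝ => 2 * v p * vt p :=
      (continuous_const.mul hv.continuous).mul hvt.continuous
    obtain ⟨C, hC⟩ := hK.exists_bound_of_continuousOn hfc.continuousOn
    have h := intervalIntegral.hasDerivAt_integral_of_dominated_loc_of_deriv_le
      (F := fun s x => (v (s, x)) ^ 2) (F' := fun s x => 2 * v (s, x) * vt (s, x))
      (x₀ := t) (a := 0) (b := 1) (bound := fun _ => C) (μ := volume)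
      (s := Metric.ball t 1) (Metric.ball_mem_nhds t one_pos)
      (Filter.Eventually.of_forall fun s =>
        (((hcv s).pow 2).aestronglyMeasurable).restrict)
      (((hcv t).pow 2).intervalIntegrable 0 1)
      ((((continuous_const.mul (hcv t)).mul (hcvt t)).aestronglyMeasurable).restrict)
      (Filter.Eventually.of_forall fun x hx s hs => ?_)
      intervalIntegrable_const
      (Filter.Eventually.of_forall fun x hx s hs => ?_)
    · exact h.2
    · -- bound
      have hxmem : x ∈ Icc (0:ℝ) 1 := by
        rw [uIoc_of_le (by norm_num : (0:ℝ) ≤ 1)] at hx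
        exact ⟨le_of_lt hx.1, hx.2⟩
      have hsmem : s ∈ Icc (t - 1) (t + 1) := by
        rw [Metric.mem_ball, Real.dist_eq, abs_sub_lt_iff] at hs
        constructor <;> linarith [hs.1, hs.2]
      exact hC (s, x) ⟨hsmem, hxmem⟩
    · -- differentiability in s
      have h2 := (hvs s x).pow 2
      norm_num at h2
      exact h2
  -- Step 2a : first integration by parts
  have hbparts : ∫ x in (0:ℝ)..1, 2 * v (t, x) * vt (t, x)
      = -∫ x in (0:ℝ)..1, 2 * v2 (t, x) * w (t, x) := by
    have a1 : ContinuousOn (fun x => 2 * v (t, x)) (Set.uIcc (0:ℝ) 1) :=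
      (continuous_const.mul (hcv t)).continuousOn
    have a2 : ContinuousOn (fun x => w (t, x)) (Set.uIcc (0:ℝ) 1) := (hcw t).continuousOn
    have a3 : ∀ x ∈ Set.Ioo (min (0:ℝ) 1) (max (0:ℝ) 1),
        HasDerivAt (fun x => 2 * v (t, x)) (2 * v2 (t, x)) x :=
      fun x _ => by simpa using ((hvx2 t x).const_mul 2)
    have a4 : ∀ x ∈ Set.Ioo (min (0:ℝ) 1) (max (0:ℝ) 1),
        HasDerivAt (fun x => w (t, x)) (wx (t, x)) x := fun x _ => hwx t x
    have a5 : IntervalIntegrable (fun x => 2 * v2 (t, x)) volume 0 1 :=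
      (continuous_const.mul (hcv2 t)).intervalIntegrable 0 1
    have a6 : IntervalIntegrable (fun x => wx (t, x)) volume 0 1 :=
      (hwxC.continuous.comp (continuous_const.prodMk continuous_id)).intervalIntegrable 0 1
    have hQ := intervalIntegral.integral_mul_deriv_eq_deriv_mul_of_hasDerivAt a1 a2 a3 a4 a5 a6
    have hL : ∫ x in (0:ℝ)..1, 2 * v (t, x) * vt (t, x)
        = ∫ x in (0:ℝ)..1, 2 * v (t, x) * wx (t, x) := by
      refine intervalIntegral.integral_congr fun x _ => ?_
      rw [hclair (t, x)]
    rw [hL, hQ, hv10, hw10]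
    ring
  -- Step 2b : splitting and second integration by parts
  have hsplit : ∫ x in (0:ℝ)..1, 2 * v2 (t, x) * w (t, x)
      = 2 * (∫ x in (0:ℝ)..1, (v2 (t, x)) ^ 2)
        + 2 * ∫ x in (0:ℝ)..1, v2 (t, x) * (v (t, x)) ^ 2 / u t x := by
    have h1 : ∫ x in (0:ℝ)..1, 2 * v2 (t, x) * w (t, x)
        = ∫ x in (0:ℝ)..1, (2 * (v2 (t, x)) ^ 2 + 2 * (v2 (t, x) * (v (t, x)) ^ 2 / u t x)) := by
      refine intervalIntegral.integral_congr fun x _ => ?_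
      rw [hpde' t x]
      ring
    rw [h1, intervalIntegral.integral_add, intervalIntegral.integral_const_mul,
      intervalIntegral.integral_const_mul]
    · exact (continuous_const.mul ((hcv2 t).pow 2)).intervalIntegrable 0 1
    · refine (continuous_const.mul (((hcv2 t).mul ((hcv t).pow 2)).div (hcu t)
        fun x => (hpos t x).ne')).intervalIntegrable 0 1
  have hparts2 : ∫ x in (0:ℝ)..1, v2 (t, x) * (v (t, x)) ^ 2 / u t x
      = (1 / 3) * ∫ x in (0:ℝ)..1, (v (t, x)) ^ 4 / (u t x) ^ 2 := by
    have b1 : ContinuousOn (fun x => (u t x)⁻¹) (Set.uIcc (0:ℝ) 1) :=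
      ((hcu t).inv₀ fun x => (hpos t x).ne').continuousOn
    have b2 : ContinuousOn (fun x => (v (t, x)) ^ 3) (Set.uIcc (0:ℝ) 1) :=
      ((hcv t).pow 3).continuousOn
    have b3 : ∀ x ∈ Set.Ioo (min (0:ℝ) 1) (max (0:ℝ) 1),
        HasDerivAt (fun x => (u t x)⁻¹) (-v (t, x) / (u t x) ^ 2) x :=
      fun x _ => (hvx t x).inv (hpos t x).ne'
    have b4 : ∀ x ∈ Set.Ioo (min (0:ℝ) 1) (max (0:ℝ) 1),
        HasDerivAt (fun x => (v (t, x)) ^ 3) (3 * (v (t, x)) ^ 2 * v2 (t, x)) x := by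
      intro x _
      have h3 := (hvx2 t x).pow 3
      norm_num at h3
      exact h3
    have b5 : IntervalIntegrable (fun x => -v (t, x) / (u t x) ^ 2) volume 0 1 :=
      ((hcv t).neg.div ((hcu t).pow 2)
        fun x => pow_ne_zero 2 (hpos t x).ne').intervalIntegrable 0 1
    have b6 : IntervalIntegrable (fun x => 3 * (v (t, x)) ^ 2 * v2 (t, x)) volume 0 1 :=
      ((continuous_const.mul ((hcv t).pow 2)).mul (hcv2 t)).intervalIntegrable 0 1
    have hQ := intervalIntegral.integral_mul_deriv_eq_deriv_mul_of_hasDerivAt b1 b2 b3 b4 b5 b6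
    -- hQ : ∫ (u)⁻¹ * (3 v² v2) = (u 1)⁻¹ v(1)³ - (u 0)⁻¹ v(0)³ - ∫ (-v/u²) * v³
    have hL : ∫ x in (0:ℝ)..1, v2 (t, x) * (v (t, x)) ^ 2 / u t x
        = (1 / 3) * ∫ x in (0:ℝ)..1, (u t x)⁻¹ * (3 * (v (t, x)) ^ 2 * v2 (t, x)) := by
      rw [← intervalIntegral.integral_const_mul]
      refine intervalIntegral.integral_congr fun x _ => ?_
      ring
    have hR : ∫ x in (0:ℝ)..1, (-v (t, x) / (u t x) ^ 2) * (v (t, x)) ^ 3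
        = -∫ x in (0:ℝ)..1, (v (t, x)) ^ 4 / (u t x) ^ 2 := by
      rw [← intervalIntegral.integral_neg]
      refine intervalIntegral.integral_congr fun x _ => ?_
      ring
    rw [hL, hQ, hR, hv10, hu10]
    ring
  -- value of the derivative
  have hval : ∫ x in (0:ℝ)..1, 2 * v (t, x) * vt (t, x)
      = -2 * (∫ x in (0:ℝ)..1, (v2 (t, x)) ^ 2)
        - (2 / 3) * ∫ x in (0:ℝ)..1, (v (t, x)) ^ 4 / (u t x) ^ 2 := by
    rw [hbparts, hsplit, hparts2]
    ring
  -- translate the integrals back to `deriv` form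
  have e1 : (fun s => ∫ x in (0:ℝ)..1, (deriv (u s) x) ^ 2)
      = fun s => ∫ x in (0:ℝ)..1, (v (s, x)) ^ 2 := by
    funext s
    exact intervalIntegral.integral_congr fun x _ => by rw [hderiv_eq]
  have e2 : ∫ x in (0:ℝ)..1, (deriv (deriv (u t)) x) ^ 2
      = ∫ x in (0:ℝ)..1, (v2 (t, x)) ^ 2 :=
    intervalIntegral.integral_congr fun x _ => by rw [hderiv2_eq]
  have e3 : ∫ x in (0:ℝ)..1, (deriv (u t) x) ^ 4 / (u t x) ^ 2
      = ∫ x in (0:ℝ)..1, (v (t, x)) ^ 4 / (u t x) ^ 2 :=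
    intervalIntegral.integral_congr fun x _ => by rw [hderiv_eq]
  have e4 : ∫ x in (0:ℝ)..1, (deriv (u t) x) ^ 2 = ∫ x in (0:ℝ)..1, (v (t, x)) ^ 2 :=
    intervalIntegral.integral_congr fun x _ => by rw [hderiv_eq]
  constructor
  · rw [e1, e2, e3, ← hval]
    exact step1
  · -- the Poincaré–Wirtinger estimate
    rw [e2, e3, e4]
    have hmean : ∫ x in (0:ℝ)..1, v (t, x) = 0 := by
      have hint := intervalIntegral.integral_eq_sub_of_hasDerivAt
        (f := u t) (f' := fun x => v (t, x)) (a := 0) (b := 1)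
        (fun x _ => hvx t x) ((hcv t).intervalIntegrable 0 1)
      rw [hint, hu10, sub_self]
    have hwir := wirtinger (g := fun x => v (t, x)) (g' := fun x => v2 (t, x))
      (hvx2 t) (hcv2 t) (hvper t) hmean
    have hX : 0 ≤ ∫ x in (0:ℝ)..1, (v (t, x)) ^ 4 / (u t x) ^ 2 :=
      intervalIntegral.integral_nonneg (by norm_num) fun x _ => by positivity
    nlinarith [hwir, hX]
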